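/- For every fixed p ∈ ℕ₀ there exist constants c, C > 0 such that for all odd m ∈ ℕ₀: c·m^{1/4 − p/2} ≤ m!!/√((m+p)!) ≤ C·m^{1/4 − p/2}. -/

import Mathlib

/-!
For odd `m = 2k + 1` the quotient `m‼ / (m - 1)‼ = m‼² / m!` squares to a number between
`(m + 1) / 2` and `m` (a Wallis-type estimate), so `m‼⁴` and `m · m!²`
agree up to a factor `2`. Together with `m! · mᵖ ≤ (m + p)! ≤ m! · ((p + 1) m)ᵖ` this pins
`(m‼ / √(m + p)!)⁴` between `m^(1 - 2p) / (2 (p + 1)^(2p))` and `m^(1 - 2p)`; take fourth roots.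
-/

noncomputable section

/-- The double factorial on natural numbers. -/
def dfacNat : ℕ → ℕ
  | 0 => 1
  | 1 => 1
  | (n + 2) => (n + 2) * dfacNat n

open Nat

theorem dfacNat_eq_doubleFactorial : ∀ n, dfacNat n = n‼
  | 0 | 1 => rfl
  | n + 2 => by rw [dfacNat, doubleFactorial_add_two, dfacNat_eq_doubleFactorial n]

theorem Nat.doubleFactorial_odd_sq_le (k : ℕ) : (2 * k + 1)‼ ^ 2 ≤ (2 * k + 1) * (2 * k)‼ ^ 2 := by
  induction k with
  | zero => simp
  | succ k ih =>
    rw [show 2 * (k + 1) = 2 * k + 2 by ring, doubleFactorial_add_two,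
      show 2 * k + 2 + 1 = 2 * k + 1 + 2 by ring, doubleFactorial_add_two]
    calc ((2 * k + 1 + 2) * (2 * k + 1)‼) ^ 2
        = (2 * k + 3) ^ 2 * (2 * k + 1)‼ ^ 2 := by ring
      _ ≤ (2 * k + 3) ^ 2 * ((2 * k + 1) * (2 * k)‼ ^ 2) := by gcongr
      _ = (2 * k + 3) * ((2 * k + 3) * (2 * k + 1)) * (2 * k)‼ ^ 2 := by ring
      _ ≤ (2 * k + 3) * (2 * k + 2) ^ 2 * (2 * k)‼ ^ 2 := by gcongr; nlinarith
      _ = _ := by ring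

theorem Nat.even_sq_le_doubleFactorial_odd_sq (k : ℕ) :
    (2 * k + 2) * (2 * k)‼ ^ 2 ≤ 2 * (2 * k + 1)‼ ^ 2 := by
  induction k with
  | zero => simp
  | succ k ih =>
    rw [show 2 * (k + 1) = 2 * k + 2 by ring, doubleFactorial_add_two,
      show 2 * k + 2 + 1 = 2 * k + 1 + 2 by ring, doubleFactorial_add_two]
    calc (2 * k + 2 + 2) * ((2 * k + 2) * (2 * k)‼) ^ 2
        = ((2 * k + 4) * (2 * k + 2)) * ((2 * k + 2) * (2 * k)‼ ^ 2) := by ring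
      _ ≤ (2 * k + 3) ^ 2 * (2 * (2 * k + 1)‼ ^ 2) := by gcongr; nlinarith
      _ = _ := by ring

theorem Nat.doubleFactorial_pow_four_le {m : ℕ} (hm : Odd m) : m‼ ^ 4 ≤ m * (m !) ^ 2 := by
  obtain ⟨k, rfl⟩ := hm
  rw [factorial_eq_mul_doubleFactorial]
  calc (2 * k + 1)‼ ^ 4 = (2 * k + 1)‼ ^ 2 * (2 * k + 1)‼ ^ 2 := by ring
    _ ≤ (2 * k + 1)‼ ^ 2 * ((2 * k + 1) * (2 * k)‼ ^ 2) := by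
      gcongr; exact doubleFactorial_odd_sq_le k
    _ = _ := by ring

theorem Nat.mul_factorial_sq_le {m : ℕ} (hm : Odd m) : m * (m !) ^ 2 ≤ 2 * m‼ ^ 4 := by
  obtain ⟨k, rfl⟩ := hm
  rw [factorial_eq_mul_doubleFactorial]
  calc (2 * k + 1) * ((2 * k + 1)‼ * (2 * k)‼) ^ 2
      ≤ (2 * k + 1)‼ ^ 2 * ((2 * k + 2) * (2 * k)‼ ^ 2) := by
        rw [mul_pow]; nlinarith [Nat.zero_le ((2 * k + 1)‼ ^ 2 * (2 * k)‼ ^ 2)]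
    _ ≤ (2 * k + 1)‼ ^ 2 * (2 * (2 * k + 1)‼ ^ 2) :=
      Nat.mul_le_mul_left _ (even_sq_le_doubleFactorial_odd_sq k)
    _ = _ := by ring

theorem Nat.factorial_add_le_mul_pow {m : ℕ} (hm : 1 ≤ m) (p : ℕ) :
    (m + p)! ≤ m ! * ((p + 1) * m) ^ p := by
  rw [← factorial_mul_ascFactorial]
  gcongr
  calc (m + 1).ascFactorial p ≤ (m + p) ^ p := ascFactorial_le_pow_add m p
    _ ≤ ((p + 1) * m) ^ p := by gcongr; nlinarith

theorem Nat.factorial_mul_pow_le_factorial_add (m p : ℕ) : m ! * m ^ p ≤ (m + p)! :=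
  le_trans (by gcongr; omega) factorial_mul_pow_le_factorial

theorem Nat.doubleFactorial_pow_four_mul_sq_le {m : ℕ} (hm : Odd m) (p : ℕ) :
    m‼ ^ 4 * (m ^ p) ^ 2 ≤ m * ((m + p)!) ^ 2 :=
  calc m‼ ^ 4 * (m ^ p) ^ 2 ≤ m * (m !) ^ 2 * (m ^ p) ^ 2 := by
        gcongr; exact doubleFactorial_pow_four_le hm
    _ = m * (m ! * m ^ p) ^ 2 := by ring
    _ ≤ m * ((m + p)!) ^ 2 := by gcongr; exact factorial_mul_pow_le_factorial_add m p

theorem Nat.mul_factorial_add_sq_le {m : ℕ} (hm : Odd m) (p : ℕ) :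
    m * ((m + p)!) ^ 2 ≤ 2 * (p + 1) ^ (2 * p) * (m‼ ^ 4 * (m ^ p) ^ 2) :=
  calc m * ((m + p)!) ^ 2 ≤ m * (m ! * ((p + 1) * m) ^ p) ^ 2 := by
        gcongr; exact factorial_add_le_mul_pow hm.pos p
    _ = (p + 1) ^ (2 * p) * (m ^ p) ^ 2 * (m * (m !) ^ 2) := by
        rw [mul_pow (p + 1) m p]; ring
    _ ≤ (p + 1) ^ (2 * p) * (m ^ p) ^ 2 * (2 * m‼ ^ 4) :=
        Nat.mul_le_mul_left _ (mul_factorial_sq_le hm)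
    _ = _ := by ring

theorem Real.natCast_rpow_quarter_sub_half_pow_four {m : ℕ} (hm : 0 < m) (p : ℕ) :
    ((m : ℝ) ^ ((1 : ℝ) / 4 - (p : ℝ) / 2)) ^ 4 = m / ((m : ℝ) ^ p) ^ 2 := by
  have hm' : (0 : ℝ) < m := by exact_mod_cast hm
  have hexp : ((1 : ℝ) / 4 - (p : ℝ) / 2) * (4 : ℕ) = 1 - ((p * 2 : ℕ) : ℝ) := by push_cast; ring
  rw [← Real.rpow_mul_natCast hm'.le, hexp, Real.rpow_sub hm', Real.rpow_one, Real.rpow_natCast,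
    pow_mul]

theorem Real.div_sqrt_pow_four (a : ℝ) {b : ℝ} (hb : 0 ≤ b) : (a / √b) ^ 4 = a ^ 4 / b ^ 2 := by
  rw [div_pow, show (4 : ℕ) = 2 * 2 from rfl, pow_mul (√b), Real.sq_sqrt hb]

theorem dfac_div_sqrt_factorial_asymptotics (p : ℕ) :
    ∃ c C : ℝ, 0 < c ∧ 0 < C ∧ ∀ m : ℕ, Odd m →
      c * (m : ℝ) ^ ((1 : ℝ) / 4 - (p : ℝ) / 2)
          ≤ (dfacNat m : ℝ) / Real.sqrt ((m + p).factorial) ∧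
      (dfacNat m : ℝ) / Real.sqrt ((m + p).factorial)
          ≤ C * (m : ℝ) ^ ((1 : ℝ) / 4 - (p : ℝ) / 2) := by
  refine ⟨(2 * (p + 1) ^ (2 * p) : ℝ)⁻¹ ^ ((4 : ℕ)⁻¹ : ℝ), 1, by positivity, one_pos, fun m hm => ?_⟩
  have hm₀ : (0 : ℝ) < m := by exact_mod_cast hm.pos
  rw [dfacNat_eq_doubleFactorial]
  constructor
  · refine le_of_pow_le_pow_left₀ four_ne_zero (by positivity) ?_
    rw [mul_pow, Real.rpow_inv_natCast_pow (by positivity) four_ne_zero,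
      Real.natCast_rpow_quarter_sub_half_pow_four hm.pos, Real.div_sqrt_pow_four _ (by positivity),
      inv_mul_eq_div, div_div, div_le_div_iff₀ (by positivity) (by positivity)]
    exact_mod_cast (Nat.mul_factorial_add_sq_le hm p).trans_eq (by ring)
  · rw [one_mul]
    refine le_of_pow_le_pow_left₀ four_ne_zero (by positivity) ?_
    rw [Real.natCast_rpow_quarter_sub_half_pow_four hm.pos, Real.div_sqrt_pow_four _ (by positivity),
      div_le_div_iff₀ (by positivity) (by positivity)]
    exact_mod_cast Nat.doubleFactorial_pow_four_mul_sq_le hm p
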